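/- Let $(X,Y) \sim P_X \circ P_{Y|X}$ on finite sets, $G_X \sim \mathrm{NM}(P_X)$, $G_{Y|X} \sim \mathrm{NM}(P_{Y|X})$ independent, and $f : \mathcal{X} \times \mathcal{Y} \to \mathbb{R}$. Then: (i) $\langle G_X \circ P_{Y|X}, f \rangle = \sum_{x,y} G_X(x) P_{Y|X}(y|x) f(x,y)$ is Gaussian with mean $0$ and variance $\mathrm{Var}[\mathbb{E}[f(X,Y)\mid X]]$; and (ii) $\langle \sqrt{P_X} \circ G_{Y|X}, f \rangle = \sum_{x,y} \sqrt{P_X(x)}\, G_{Y|X}(y|x) f(x,y)$ is Gaussian with mean $0$ and variance $\mathbb{E}[\mathrm{Var}[f(X,Y)\mid X]]$. -/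
import Mathlib


open MeasureTheory ProbabilityTheory

/-- The covariance matrix of the Gaussian-multinomial distribution `NM(P)`. -/
noncomputable def nmCov {X : Type*} [DecidableEq X] (P : X → ℝ) : X → X → ℝ :=
  fun x x' => if x = x' then P x * (1 - P x) else -(P x * P x')

/-- Block-diagonal covariance of the conditional Gaussian-multinomial `NM(P_{Y|X})`. -/
noncomputable def nmCovCond {X Y : Type*} [DecidableEq X] [DecidableEq Y]
    (Q : X → Y → ℝ) : (X × Y) → (X × Y) → ℝ :=
  fun p q => if p.1 = q.1 then nmCov (Q p.1) p.2 q.2 else 0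

/-- `G` is a centered Gaussian random vector with covariance matrix `S`. -/
def IsCenteredGaussianVec {Ω X : Type*} [Fintype X] [MeasurableSpace Ω]
    (μ : Measure Ω) (G : Ω → X → ℝ) (S : X → X → ℝ) : Prop :=
  ∀ ℓ : X → ℝ, Measure.map (fun ω => ∑ x, ℓ x * G ω x) μ =
    gaussianReal 0 (Real.toNNReal (∑ x, ∑ x', ℓ x * S x x' * ℓ x'))

/-- The key quadratic-form identity for the multinomial covariance. -/
lemma nmQuad {X : Type*} [Fintype X] [DecidableEq X] (P a : X → ℝ) :
    ∑ x, ∑ x', a x * nmCov P x x' * a x' =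
      ∑ x, P x * a x ^ 2 - (∑ x, P x * a x) ^ 2 := by
  have h : ∀ x x', a x * nmCov P x x' * a x' =
      (if x = x' then P x * a x ^ 2 else 0) - (P x * a x) * (P x' * a x') := by
    intro x x'
    unfold nmCov
    split
    · next h => subst h; ring
    · ring
  simp only [h, Finset.sum_sub_distrib, Finset.sum_ite_eq, Finset.mem_univ, if_pos,
    ← Finset.sum_mul, ← Finset.mul_sum]
  ring

/-- with `G_X ∼ NM(P_X)` and `G_{Y|X} ∼ NM(P_{Y|X})` independent,
for any `f : X × Y → ℝ`:
(i) `⟨G_X ∘ P_{Y|X}, f⟩` is Gaussian with mean 0 and variance `Var[E[f(X,Y)|X]]`;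
(ii) `⟨√P_X ∘ G_{Y|X}, f⟩` is Gaussian with mean 0 and variance `E[Var[f(X,Y)|X]]`,
where `(X,Y) ∼ P_X ∘ P_{Y|X}`. -/
theorem nm_semidirect_functionals {Ω X Y : Type*} [Fintype X] [Fintype Y]
    [DecidableEq X] [DecidableEq Y] [MeasurableSpace Ω]
    (μ : Measure Ω) [IsProbabilityMeasure μ]
    (PX : X → ℝ) (hPX0 : ∀ x, 0 ≤ PX x) (hPX1 : ∑ x, PX x = 1)
    (Q : X → Y → ℝ) (hQ0 : ∀ x y, 0 ≤ Q x y) (hQ1 : ∀ x, ∑ y, Q x y = 1)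
    (GX : Ω → X → ℝ) (GYX : Ω → X × Y → ℝ)
    (hjoint : IsCenteredGaussianVec μ (fun ω => Sum.elim (GX ω) (GYX ω))
      (fun i j => match i, j with
        | Sum.inl x, Sum.inl x' => nmCov PX x x'
        | Sum.inr p, Sum.inr q => nmCovCond Q p q
        | _, _ => 0))
    (f : X → Y → ℝ) :
    (Measure.map (fun ω => ∑ x, ∑ y, GX ω x * Q x y * f x y) μ =
      gaussianReal 0
        (Real.toNNReal (∑ x, PX x * (∑ y, Q x y * f x y) ^ 2
          - (∑ x, ∑ y, PX x * Q x y * f x y) ^ 2)))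
    ∧ (Measure.map (fun ω => ∑ x, ∑ y, Real.sqrt (PX x) * GYX ω (x, y) * f x y) μ =
      gaussianReal 0
        (Real.toNNReal (∑ x, PX x *
          ((∑ y, Q x y * f x y ^ 2) - (∑ y, Q x y * f x y) ^ 2)))) := by
  constructor
  · -- Part (i): use the linear functional supported on the first block.
    set a : X → ℝ := fun x => ∑ y, Q x y * f x y with ha
    have h := hjoint (Sum.elim a 0)
    have hF : (fun ω => ∑ i, Sum.elim a 0 i *
        Sum.elim (GX ω) (GYX ω) i) = fun ω => ∑ x, ∑ y, GX ω x * Q x y * f x y := by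
      funext ω
      rw [Fintype.sum_sum_type]
      simp only [Sum.elim_inl, Sum.elim_inr, Pi.zero_apply, zero_mul,
        Finset.sum_const_zero, add_zero]
      refine Finset.sum_congr rfl fun x _ => ?_
      rw [ha]
      rw [Finset.sum_mul]
      exact Finset.sum_congr rfl fun y _ => by ring
    have hV : (∑ i, ∑ j, Sum.elim a 0 i *
        (fun i j => match i, j with
          | Sum.inl x, Sum.inl x' => nmCov PX x x'
          | Sum.inr p, Sum.inr q => nmCovCond Q p q
          | _, _ => (0:ℝ)) i j * Sum.elim a 0 j)
        = ∑ x, PX x * (∑ y, Q x y * f x y) ^ 2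
          - (∑ x, ∑ y, PX x * Q x y * f x y) ^ 2 := by
      rw [Fintype.sum_sum_type]
      simp only [Fintype.sum_sum_type, Sum.elim_inl, Sum.elim_inr, Pi.zero_apply,
        zero_mul, mul_zero, Finset.sum_const_zero, add_zero]
      rw [nmQuad]
      have h2 : ∀ x, ∑ y, PX x * Q x y * f x y = PX x * a x := by
        intro x
        rw [ha, Finset.mul_sum]
        exact Finset.sum_congr rfl fun y _ => by ring
      simp only [h2, ha]
    rw [hF, hV] at h
    exact h
  · -- Part (ii): use the linear functional supported on the second block.
    set b : X × Y → ℝ := fun p => Real.sqrt (PX p.1) * f p.1 p.2 with hb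
    have h := hjoint (Sum.elim (0 : X → ℝ) b)
    have hF : (fun ω => ∑ i, Sum.elim (0 : X → ℝ) b i *
        Sum.elim (GX ω) (GYX ω) i)
        = fun ω => ∑ x, ∑ y, Real.sqrt (PX x) * GYX ω (x, y) * f x y := by
      funext ω
      rw [Fintype.sum_sum_type, Fintype.sum_prod_type]
      simp only [Sum.elim_inl, Sum.elim_inr, Pi.zero_apply, zero_mul,
        Finset.sum_const_zero, zero_add]
      exact Finset.sum_congr rfl fun x _ => Finset.sum_congr rfl fun y _ => by
        simp only [hb]; ring
    have hV : (∑ i, ∑ j, Sum.elim (0 : X → ℝ) b i *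
        (fun i j => match i, j with
          | Sum.inl x, Sum.inl x' => nmCov PX x x'
          | Sum.inr p, Sum.inr q => nmCovCond Q p q
          | _, _ => (0:ℝ)) i j * Sum.elim (0 : X → ℝ) b j)
        = ∑ x, PX x * ((∑ y, Q x y * f x y ^ 2) - (∑ y, Q x y * f x y) ^ 2) := by
      rw [Fintype.sum_sum_type]
      simp only [Fintype.sum_sum_type, Sum.elim_inl, Sum.elim_inr, Pi.zero_apply,
        zero_mul, mul_zero, Finset.sum_const_zero, add_zero, zero_add]
      rw [Fintype.sum_prod_type]
      have hinner : ∀ x : X, (∑ y, ∑ q : X × Y, b (x, y) * nmCovCond Q (x, y) q * b q)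
          = PX x * ((∑ y, Q x y * f x y ^ 2) - (∑ y, Q x y * f x y) ^ 2) := by
        intro x
        have : ∀ y : Y, (∑ q : X × Y, b (x, y) * nmCovCond Q (x, y) q * b q)
            = ∑ y', b (x, y) * nmCov (Q x) y y' * b (x, y') := by
          intro y
          rw [Fintype.sum_prod_type]
          rw [Finset.sum_eq_single x]
          · refine Finset.sum_congr rfl fun y' _ => ?_
            simp [nmCovCond]
          · intro x' _ hx'
            apply Finset.sum_eq_zero
            intro y' _
            simp [nmCovCond, Ne.symm hx']
          · intro hx; exact absurd (Finset.mem_univ x) hx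
        simp only [this]
        rw [nmQuad (Q x) (fun y => b (x, y))]
        have hPx := hPX0 x
        have hsq : Real.sqrt (PX x) * Real.sqrt (PX x) = PX x := Real.mul_self_sqrt hPx
        have e1 : ∑ y, Q x y * b (x, y) ^ 2 = PX x * ∑ y, Q x y * f x y ^ 2 := by
          rw [Finset.mul_sum]
          refine Finset.sum_congr rfl fun y _ => ?_
          simp only [hb]
          rw [mul_pow, Real.sq_sqrt hPx]
          ring
        have e2 : ∑ y, Q x y * b (x, y) = Real.sqrt (PX x) * ∑ y, Q x y * f x y := by
          rw [Finset.mul_sum]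
          refine Finset.sum_congr rfl fun y _ => ?_
          simp only [hb]; ring
        rw [e1, e2, mul_pow, Real.sq_sqrt hPx]
        ring
      rw [Finset.sum_congr rfl fun x _ => hinner x]
    rw [hF, hV] at h
    exact h
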